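/- For every m ≥ 0: D_{pm} = m·Δ_{p−2} + D_m, and for every k with 0 < k < p: D_{pm+k} = m·Δ_{p−2} + (p−k)(k−1) + Δ_{k−2} + D_m + max{p−k−1, D_{m+1} − D_m}. -/

import Mathlib

open MeasureTheory
open scoped NNReal ENNReal

namespace Chacon

/-- The space of digit sequences with digits in `{0, …, p-1}`. -/
def Gamma (p : ℕ) : Set (ℕ → ℕ) := {x | ∀ i, x i < p}

/-- `Γ*`: sequences with digits `< p` having infinitely many coordinates `≠ p - 1`. -/
def GammaStar (p : ℕ) : Set (ℕ → ℕ) :=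
  {x | (∀ i, x i < p) ∧ {i | x i ≠ p - 1}.Infinite}

/-- The least index `i` with `x i ≠ p - 1`. -/
noncomputable def firstNot (p : ℕ) (x : ℕ → ℕ) : ℕ :=
  sInf {i | x i ≠ p - 1}

/-- `φ(x) = x_i` where `i` is the least index with `x_i ≠ p - 1`. -/
noncomputable def phi (p : ℕ) (x : ℕ → ℕ) : ℕ :=
  x (firstNot p x)

/-- The odometer `S` (addition of `1` with carry): the initial run of digits
`p - 1` is replaced by zeros, and the first digit `≠ p - 1` is increased by one. -/
noncomputable def odo (p : ℕ) (x : ℕ → ℕ) : ℕ → ℕ :=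
  fun i =>
    if i < firstNot p x then 0
    else if i = firstNot p x then x i + 1
    else x i

/-- `φ^(m)(x) = ∑_{j=0}^{m-1} φ(S^j x)`. -/
noncomputable def phiSum (p m : ℕ) (x : ℕ → ℕ) : ℕ :=
  ∑ j ∈ Finset.range m, phi p ((odo p)^[j] x)

/-- The base-`p` digit sequence of a real number `u`. -/
noncomputable def digitsOf (p : ℕ) (u : ℝ) : ℕ → ℕ :=
  fun i => (⌊u * (p : ℝ) ^ (i + 1)⌋).toNat % p

/-- `λ`: the product probability measure on digit sequences under which the
coordinates are i.i.d., uniformly distributed in `{0, …, p-1}`; it is realized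
concretely as the distribution of the base-`p` digit sequence of a uniformly
distributed random point of `[0,1)`. -/
noncomputable def lam (p : ℕ) : Measure (ℕ → ℕ) :=
  Measure.map (digitsOf p) (volume.restrict (Set.Ico (0 : ℝ) 1))

/-- `π_m(j) = λ({x : φ^(m)(x) = j})`. -/
noncomputable def pim (p m j : ℕ) : ℝ≥0∞ :=
  lam p {x | phiSum p m x = j}

/-- `P_m^p(t) = ∑_{j ≥ 0} π_m(j) t^j`, a real polynomial
(the sum is over `0 ≤ j ≤ m (p-2)` since `0 ≤ φ^(m) ≤ m (p-2)` a.s.). -/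
noncomputable def P (p m : ℕ) (t : ℝ) : ℝ :=
  ∑ j ∈ Finset.range (m * (p - 2) + 1), (pim p m j).toReal * t ^ j

/-- The `n`-th triangular number `Δ_n = n (n+1) / 2`. -/
def tri (n : ℕ) : ℕ := n * (n + 1) / 2

/-- The degree `D_m` of `P_m^p`: the largest `j` with `π_m(j) ≠ 0`. -/
noncomputable def D (p m : ℕ) : ℕ := sSup {j | pim p m j ≠ 0}

/-- The lower degree `d_m` of `P_m^p`: the least `j` with `π_m(j) ≠ 0`. -/
noncomputable def d (p m : ℕ) : ℕ := sInf {j | pim p m j ≠ 0}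

/-!
On the base-`p` expansion of a natural number the odometer is `n ↦ n + 1`, and `φ` only reads the
digits up to the first one different from `p - 1`. A `λ`-typical sequence has infinitely many
digits `≤ p - 3`, so it agrees with the expansion of some `n` far enough for the first `m` steps of
its orbit to stay expansions; as cylinders have positive measure, the support of `π_m` is exactly
the set of values of `φ^(m)` at expansions of naturals, and `D_m` is their maximum `natD p m`.
A window of `pm + k` consecutive integers splits into `m` blocks of `p`, each contributing
`Δ_{p-2}` plus one value of `φ` a digit higher, and a remainder of `k` integers. The remainder
either does not carry, and is best when it ends at residue `p - 2`, or carries once, and is best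
when the carry is its last step; these are the two terms of the `max`.
-/

open Finset

section Odometer

variable {p : ℕ}

lemma firstNot_eq_of_forall_lt {x : ℕ → ℕ} {i₀ : ℕ} (hlow : ∀ i < i₀, x i = p - 1)
    (hi₀ : x i₀ ≠ p - 1) : firstNot p x = i₀ :=
  le_antisymm (Nat.sInf_le hi₀) (le_csInf ⟨i₀, hi₀⟩ fun _ hi => not_lt.1 fun h => hi (hlow _ h))

lemma firstNot_spec {x : ℕ → ℕ} {N : ℕ} (hN : x N ≠ p - 1) :
    firstNot p x ≤ N ∧ (∀ i < firstNot p x, x i = p - 1) ∧ x (firstNot p x) ≠ p - 1 :=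
  ⟨Nat.sInf_le hN, fun _ hi => not_not.1 (Nat.notMem_of_lt_sInf hi),
    Nat.sInf_mem (s := {i | x i ≠ p - 1}) ⟨N, hN⟩⟩

lemma phi_eq_and_odo_eqOn {x y : ℕ → ℕ} {N : ℕ} (hxy : ∀ i ≤ N, x i = y i) (hN : y N ≠ p - 1) :
    phi p x = phi p y ∧ ∀ i ≤ N, odo p x i = odo p y i := by
  obtain ⟨hle, hlow, hne⟩ := firstNot_spec hN
  have hfirst : firstNot p x = firstNot p y :=
    firstNot_eq_of_forall_lt (fun i hi => (hxy i (by omega)).trans (hlow i hi))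
      (by rwa [hxy _ hle])
  refine ⟨by rw [phi, phi, hfirst, hxy _ hle], fun i hi => ?_⟩
  simp only [odo, hfirst, hxy i hi]

lemma phiSum_add (a b : ℕ) (x : ℕ → ℕ) :
    phiSum p (a + b) x = phiSum p a x + phiSum p b ((odo p)^[a] x) := by
  simp only [phiSum, sum_range_add, ← Function.iterate_add_apply, add_comm]

lemma phiSum_succ (m : ℕ) (x : ℕ → ℕ) :
    phiSum p (m + 1) x = phiSum p m x + phi p ((odo p)^[m] x) := by
  rw [phiSum, sum_range_succ, ← phiSum]

end Odometer

section Digits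

variable {p : ℕ}

def digit (p n i : ℕ) : ℕ := n / p ^ i % p

lemma digit_zero (p n : ℕ) : digit p n 0 = n % p := by simp [digit]

lemma digit_succ (p n i : ℕ) : digit p n (i + 1) = digit p (n / p) i := by
  rw [digit, digit, pow_succ', Nat.div_div_eq_div_mul]

lemma digit_lt (hp : 0 < p) (n i : ℕ) : digit p n i < p := Nat.mod_lt _ hp

lemma digit_mul_add_zero {q r : ℕ} (hr : r < p) : digit p (p * q + r) 0 = r := by
  rw [digit_zero, mul_comm, Nat.mul_add_mod_of_lt hr]

lemma digit_mul_add_succ {q r : ℕ} (hr : r < p) (i : ℕ) :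
    digit p (p * q + r) (i + 1) = digit p q i := by
  rw [digit_succ, Nat.mul_add_div (by omega), Nat.div_eq_of_lt hr, add_zero]

lemma digit_self_ne (hp : 2 ≤ p) (n : ℕ) : digit p n n ≠ p - 1 := by
  rw [digit, Nat.div_eq_of_lt (Nat.lt_pow_self (by omega)), Nat.zero_mod]
  omega

lemma exists_lt_pow_digit_eq {L : ℕ} (b : Fin L → ℕ) (hb : ∀ i, b i < p) :
    ∃ n < p ^ L, ∀ i : Fin L, digit p n i = b i :=
  ⟨finFunctionFinEquiv (fun i => ⟨b i, hb i⟩), Fin.is_lt _, fun i => by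
    rw [digit, ← finFunctionFinEquiv_symm_apply_val, Equiv.symm_apply_apply]⟩

lemma eq_of_digit_eq {L n n' : ℕ} (hn : n < p ^ L) (hn' : n' < p ^ L)
    (h : ∀ i : Fin L, digit p n i = digit p n' i) : n = n' := by
  have := finFunctionFinEquiv.symm.injective (a₁ := ⟨n, hn⟩) (a₂ := ⟨n', hn'⟩)
    (funext fun i => Fin.ext <| by simpa only [finFunctionFinEquiv_symm_apply_val, digit] using h i)
  exact congrArg Fin.val this

lemma digit_add_one (hp : 0 < p) {i₀ t : ℕ} (hlow : ∀ i < i₀, digit p t i = p - 1)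
    (hi₀ : digit p t i₀ ≠ p - 1) (i : ℕ) :
    digit p (t + 1) i =
      if i < i₀ then 0 else if i = i₀ then digit p t i + 1 else digit p t i := by
  have ht := (Nat.div_add_mod t p).symm
  induction i₀ generalizing t i with
  | zero =>
    rw [digit_zero] at hi₀
    have hr : t % p + 1 < p := by have := Nat.mod_lt t hp; omega
    have ht' : t + 1 = p * (t / p) + (t % p + 1) := by omega
    cases i with
    | zero => rw [ht', digit_mul_add_zero hr, digit_zero]; simp
    | succ i =>
      rw [ht', digit_mul_add_succ hr, ht, digit_mul_add_succ (Nat.mod_lt t hp), ← ht]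
      simp
  | succ i₀ ih =>
    have hr : t % p = p - 1 := by simpa only [digit_zero] using hlow 0 (by omega)
    have ht' : t + 1 = p * (t / p + 1) + 0 := by
      rw [mul_add, mul_one]; have := Nat.sub_add_cancel hp; omega
    cases i with
    | zero => rw [ht', digit_mul_add_zero hp]; simp
    | succ i =>
      have hlow' : ∀ j < i₀, digit p (t / p) j = p - 1 := fun j hj => by
        simpa [digit_succ] using hlow (j + 1) (by omega)
      rw [ht', digit_mul_add_succ hp,
        ih hlow' (by simpa [digit_succ] using hi₀) i (Nat.div_add_mod _ p).symm, digit_succ]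
      simp only [add_lt_add_iff_right, add_left_inj]

lemma odo_digit (hp : 2 ≤ p) (t : ℕ) : odo p (digit p t) = digit p (t + 1) := by
  obtain ⟨-, hlow, hne⟩ := firstNot_spec (digit_self_ne hp t)
  funext i
  rw [digit_add_one (by omega) hlow hne, odo]

lemma iterate_odo_digit (hp : 2 ≤ p) (n j : ℕ) : (odo p)^[j] (digit p n) = digit p (n + j) := by
  induction j with
  | zero => rfl
  | succ j ih => rw [Function.iterate_succ_apply', ih, odo_digit hp, add_assoc]

lemma phiSum_digit (hp : 2 ≤ p) (m n : ℕ) :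
    phiSum p m (digit p n) = ∑ j ∈ range m, phi p (digit p (n + j)) := by
  simp only [phiSum, iterate_odo_digit hp]

lemma phi_digit_le (hp : 2 ≤ p) (n : ℕ) : phi p (digit p n) ≤ p - 2 := by
  obtain ⟨-, -, hne⟩ := firstNot_spec (digit_self_ne hp n)
  have := digit_lt (p := p) (by omega) n (firstNot p (digit p n))
  rw [phi]
  omega

lemma phi_digit_mul_add_of_lt {q s : ℕ} (hs : s < p - 1) : phi p (digit p (p * q + s)) = s := by
  have h0 : digit p (p * q + s) 0 = s := digit_mul_add_zero (by omega)
  rw [phi, firstNot_eq_of_forall_lt (i₀ := 0) (by simp) (by omega), h0]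

lemma phi_digit_mul_add_pred (hp : 2 ≤ p) (q : ℕ) :
    phi p (digit p (p * q + (p - 1))) = phi p (digit p q) := by
  obtain ⟨-, hlow, hne⟩ := firstNot_spec (digit_self_ne hp q)
  have hdig := digit_mul_add_succ (p := p) (q := q) (r := p - 1) (by omega)
  have hfirst : firstNot p (digit p (p * q + (p - 1))) = firstNot p (digit p q) + 1 := by
    refine firstNot_eq_of_forall_lt (fun i hi => ?_) (by rwa [hdig])
    cases i with
    | zero => exact digit_mul_add_zero (by omega)
    | succ i => rw [hdig]; exact hlow i (by omega)
  rw [phi, phi, hfirst, hdig]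

/-- `hm` and `hn` keep every carry of the first `m` odometer steps below position `N`. -/
lemma phiSum_eq_phiSum_digit {m N n : ℕ} {x : ℕ → ℕ} (hm : m ≤ p ^ N) (hn : n / p ^ N + 3 ≤ p)
    (hx : ∀ i ≤ N, x i = digit p n i) : phiSum p m x = phiSum p m (digit p n) := by
  have hp : 2 ≤ p := by have := Nat.zero_le (n / p ^ N); omega
  have htop : ∀ j ≤ m, digit p (n + j) N ≠ p - 1 := fun j hj => by
    have : (n + j) / p ^ N ≤ n / p ^ N + 1 := by
      rw [← Nat.add_div_right _ (by positivity)]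
      exact Nat.div_le_div_right (by omega)
    have := Nat.mod_le ((n + j) / p ^ N) p
    rw [digit]
    omega
  have horbit : ∀ j ≤ m, ∀ i ≤ N, (odo p)^[j] x i = digit p (n + j) i := by
    intro j
    induction j with
    | zero => simpa using hx
    | succ j ih =>
      intro hj i hi
      rw [Function.iterate_succ_apply', ← add_assoc, ← odo_digit hp]
      exact (phi_eq_and_odo_eqOn (ih (by omega)) (htop j (by omega))).2 i hi
  refine sum_congr rfl fun j hj => ?_
  have hjm := (mem_range.1 hj).le
  rw [iterate_odo_digit hp]
  exact (phi_eq_and_odo_eqOn (horbit j hjm) (htop j hjm)).1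

end Digits

lemma sum_range_id_eq_tri (n : ℕ) : ∑ i ∈ range n, i = tri (n - 1) := by
  rw [sum_range_id, tri]
  cases n <;> simp [mul_comm]

lemma sum_range_const_add (a n : ℕ) : ∑ j ∈ range n, (a + j) = n * a + tri (n - 1) := by
  rw [sum_add_distrib, sum_const, card_range, smul_eq_mul, sum_range_id_eq_tri]

section Windows

variable {p : ℕ}

lemma phiSum_digit_mul_add_of_add_le (hp : 2 ≤ p) {Q r k : ℕ} (hrk : r + k ≤ p - 1) :
    phiSum p k (digit p (p * Q + r)) = ∑ j ∈ range k, (r + j) := by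
  rw [phiSum_digit hp]
  refine sum_congr rfl fun j hj => ?_
  rw [add_assoc]
  exact phi_digit_mul_add_of_lt (by have := mem_range.1 hj; omega)

lemma phiSum_digit_mul_add_of_le_add (hp : 2 ≤ p) {Q r k : ℕ} (hr : r ≤ p - 1)
    (hrk : p ≤ r + k) (hk : k ≤ p) :
    phiSum p k (digit p (p * Q + r)) =
      ∑ j ∈ range (p - 1 - r), (r + j) + phi p (digit p Q) + ∑ j ∈ range (r + k - p), j := by
  have hsplit : k = (p - 1 - r) + (1 + (r + k - p)) := by omega
  have hcarry : p * Q + r + (p - 1 - r) + 1 = p * (Q + 1) + 0 := by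
    rw [mul_add_one]; omega
  conv_lhs => rw [hsplit]
  rw [phiSum_add, phiSum_add, iterate_odo_digit hp, iterate_odo_digit hp, hcarry,
    phiSum_digit_mul_add_of_add_le hp (by omega), phiSum_digit_mul_add_of_add_le hp (by omega),
    show p * Q + r + (p - 1 - r) = p * Q + (p - 1) by omega]
  simp [phiSum, phi_digit_mul_add_pred hp, add_assoc]

lemma phiSum_digit_mul_add_self (hp : 2 ≤ p) {Q r : ℕ} (hr : r < p) :
    phiSum p p (digit p (p * Q + r)) = tri (p - 2) + phi p (digit p Q) := by
  have hresidues : ∑ j ∈ range (p - 1 - r), (r + j) + ∑ j ∈ range r, j = tri (p - 2) := by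
    rw [add_comm, ← sum_range_add, show r + (p - 1 - r) = p - 1 by omega, sum_range_id_eq_tri,
      Nat.sub_sub]
  rw [phiSum_digit_mul_add_of_le_add hp (by omega) (by omega) le_rfl, Nat.add_sub_cancel,
    ← hresidues]
  ring

lemma phiSum_digit_mul (hp : 2 ≤ p) {r : ℕ} (hr : r < p) (m q : ℕ) :
    phiSum p (p * m) (digit p (p * q + r)) = m * tri (p - 2) + phiSum p m (digit p q) := by
  induction m with
  | zero => simp [phiSum]
  | succ m ih =>
    rw [mul_add_one, phiSum_add, ih, iterate_odo_digit hp,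
      show p * q + r + p * m = p * (q + m) + r by ring, phiSum_digit_mul_add_self hp hr,
      phiSum_succ, iterate_odo_digit hp]
    ring

lemma phiSum_digit_mul_add (hp : 2 ≤ p) {r : ℕ} (hr : r < p) (m k q : ℕ) :
    phiSum p (p * m + k) (digit p (p * q + r)) =
      m * tri (p - 2) + phiSum p m (digit p q) + phiSum p k (digit p (p * (q + m) + r)) := by
  rw [phiSum_add, phiSum_digit_mul hp hr, iterate_odo_digit hp,
    show p * q + r + p * m = p * (q + m) + r by ring]

/-- The `k - 1` residues met by a window that carries are distinct elements of `[0, p - 2]`. -/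
lemma residue_sum_le_of_carry {r k : ℕ} (hr : r ≤ p - 1) (hrk : p ≤ r + k) (hk : k ≤ p) :
    ∑ j ∈ range (p - 1 - r), (r + j) + ∑ j ∈ range (r + k - p), j ≤
      ∑ j ∈ range (k - 1), (p - k + j) := by
  calc _ = ∑ j ∈ range (r + k - p), j + ∑ j ∈ range (p - 1 - r), (p - k + (r + k - p + j)) := by
        rw [add_comm]
        congr 1
        exact sum_congr rfl fun j _ => by omega
    _ ≤ ∑ j ∈ range (r + k - p), (p - k + j) +
          ∑ j ∈ range (p - 1 - r), (p - k + (r + k - p + j)) := by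
        gcongr
        omega
    _ = _ := by rw [← sum_range_add, show r + k - p + (p - 1 - r) = k - 1 by omega]

end Windows

noncomputable def natD (p m : ℕ) : ℕ := ⨆ n, phiSum p m (digit p n)

section NatD

variable {p : ℕ}

lemma phiSum_digit_le (hp : 2 ≤ p) (m n : ℕ) : phiSum p m (digit p n) ≤ m * (p - 2) := by
  rw [phiSum_digit hp]
  exact (sum_le_sum fun j _ => phi_digit_le hp _).trans (by simp)

lemma bddAbove_range_phiSum_digit (hp : 2 ≤ p) (m : ℕ) :
    BddAbove (Set.range fun n => phiSum p m (digit p n)) :=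
  ⟨m * (p - 2), Set.forall_mem_range.2 (phiSum_digit_le hp m)⟩

lemma phiSum_digit_le_natD (hp : 2 ≤ p) (m n : ℕ) : phiSum p m (digit p n) ≤ natD p m :=
  le_ciSup (bddAbove_range_phiSum_digit hp m) n

lemma exists_phiSum_digit_eq_natD (hp : 2 ≤ p) (m : ℕ) : ∃ n, phiSum p m (digit p n) = natD p m :=
  Nat.sSup_mem (Set.range_nonempty _) (bddAbove_range_phiSum_digit hp m)

lemma natD_le_natD_succ (hp : 2 ≤ p) (m : ℕ) : natD p m ≤ natD p (m + 1) :=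
  ciSup_le fun n => calc
    phiSum p m (digit p n) ≤ phiSum p (m + 1) (digit p n) := by
      rw [phiSum_succ]; exact Nat.le_add_right _ _
    _ ≤ natD p (m + 1) := phiSum_digit_le_natD hp (m + 1) n

lemma natD_mul (hp : 2 ≤ p) (m : ℕ) : natD p (p * m) = m * tri (p - 2) + natD p m := by
  apply le_antisymm
  · refine ciSup_le fun v => ?_
    rw [← Nat.div_add_mod v p, phiSum_digit_mul hp (Nat.mod_lt v (by omega))]
    exact Nat.add_le_add_left (phiSum_digit_le_natD hp m _) _
  · obtain ⟨w, hw⟩ := exists_phiSum_digit_eq_natD hp m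
    rw [← hw, ← phiSum_digit_mul hp (r := 0) (by omega)]
    exact phiSum_digit_le_natD hp _ _

lemma natD_mul_add_eq_max (hp : 2 ≤ p) (m : ℕ) {k : ℕ} (hk0 : 0 < k) (hk : k < p) :
    natD p (p * m + k) = m * tri (p - 2) +
      max (∑ j ∈ range k, (p - 1 - k + j) + natD p m)
        (∑ j ∈ range (k - 1), (p - k + j) + natD p (m + 1)) := by
  apply le_antisymm
  · refine ciSup_le fun v => ?_
    have hr := Nat.mod_lt v (show 0 < p by omega)
    rw [← Nat.div_add_mod v p, phiSum_digit_mul_add hp hr]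
    have hm := phiSum_digit_le_natD hp m (v / p)
    rcases le_or_gt (v % p + k) (p - 1) with hlow | hhigh
    · rw [phiSum_digit_mul_add_of_add_le hp hlow]
      have : ∑ j ∈ range k, (v % p + j) ≤ ∑ j ∈ range k, (p - 1 - k + j) :=
        sum_le_sum fun j _ => by omega
      omega
    · rw [phiSum_digit_mul_add_of_le_add hp (by omega) (by omega) hk.le]
      have hsucc := phiSum_succ (p := p) m (digit p (v / p))
      rw [iterate_odo_digit hp] at hsucc
      have := phiSum_digit_le_natD hp (m + 1) (v / p)
      have := residue_sum_le_of_carry (r := v % p) (k := k) (by omega) (by omega) hk.le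
      omega
  · obtain ⟨w, hw⟩ := exists_phiSum_digit_eq_natD hp m
    obtain ⟨w', hw'⟩ := exists_phiSum_digit_eq_natD hp (m + 1)
    have hA := phiSum_digit_le_natD hp (p * m + k) (p * w + (p - 1 - k))
    rw [phiSum_digit_mul_add hp (r := p - 1 - k) (by omega),
      phiSum_digit_mul_add_of_add_le hp (by omega), hw] at hA
    have hB := phiSum_digit_le_natD hp (p * m + k) (p * w' + (p - k))
    rw [phiSum_digit_mul_add hp (r := p - k) (by omega),
      phiSum_digit_mul_add_of_le_add hp (by omega) (by omega) hk.le,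
      show p - 1 - (p - k) = k - 1 by omega, show p - k + k - p = 0 by omega] at hB
    have hsucc := phiSum_succ (p := p) m (digit p w')
    rw [iterate_odo_digit hp, hw'] at hsucc
    simp only [range_zero, sum_empty, add_zero] at hB
    omega

lemma natD_mul_add (hp : 2 ≤ p) (m : ℕ) {k : ℕ} (hk0 : 0 < k) (hk : k < p) :
    natD p (p * m + k) = m * tri (p - 2) + (p - k) * (k - 1) + tri (k - 2) + natD p m +
      max (p - k - 1) (natD p (m + 1) - natD p m) := by
  have hA : ∑ j ∈ range k, (p - 1 - k + j) = ∑ j ∈ range (k - 1), (p - k + j) + (p - k - 1) := by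
    rw [← Nat.sub_add_cancel hk0, sum_range_succ', Nat.add_sub_cancel]
    congr 1
    · exact sum_congr rfl fun j _ => by omega
    · omega
  have hB : ∑ j ∈ range (k - 1), (p - k + j) = (p - k) * (k - 1) + tri (k - 2) := by
    rw [sum_range_const_add, mul_comm, Nat.sub_sub]
  have := natD_le_natD_succ hp m
  rw [natD_mul_add_eq_max hp m hk0 hk, hA, hB]
  omega

end NatD

section Measure

open Set MeasureTheory

variable {p : ℕ}

lemma measurable_digitsOf (p : ℕ) : Measurable (digitsOf p) :=
  measurable_pi_lambda _ fun _ => (measurable_of_countable fun z : ℤ => z.toNat % p).comp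
    (Int.measurable_floor.comp (measurable_id.mul_const _))

lemma digitsOf_lt (hp : 0 < p) (u : ℝ) (i : ℕ) : digitsOf p u i < p := Nat.mod_lt _ hp

lemma digitsOf_eq_digit_floor (u : ℝ) {L : ℕ} (i : Fin L) :
    digitsOf p u i = digit p ⌊u * (p : ℝ) ^ L⌋₊ i.rev := by
  have hsplit : (p : ℝ) ^ L = (p : ℝ) ^ ((i : ℕ) + 1) * (p : ℝ) ^ (i.rev : ℕ) := by
    rw [← pow_add, Fin.val_rev]
    congr 1
    omega
  rcases Nat.eq_zero_or_pos p with rfl | hp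
  · simp [digitsOf, digit, zero_pow i.pos.ne']
  have hdiv : u * (p : ℝ) ^ ((i : ℕ) + 1) = u * (p : ℝ) ^ L / ((p ^ (i.rev : ℕ) : ℕ) : ℝ) := by
    rw [hsplit, Nat.cast_pow]
    field_simp
  rw [digitsOf, Int.floor_toNat, hdiv, Nat.floor_div_natCast, digit]

lemma lam_apply {S : Set (ℕ → ℕ)} (hS : MeasurableSet S) :
    lam p S = volume (digitsOf p ⁻¹' S ∩ Ico (0 : ℝ) 1) := by
  rw [lam, Measure.map_apply (measurable_digitsOf p) hS,
    Measure.restrict_apply (hS.preimage (measurable_digitsOf p))]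

lemma ae_lam_mem_Gamma (hp : 0 < p) : ∀ᵐ x ∂lam p, x ∈ Gamma p := by
  have hΓ : MeasurableSet (Gamma p) := by
    simp only [Gamma, ofPred_forall]
    exact .iInter fun i => measurableSet_Iio.preimage (measurable_pi_apply i)
  exact (ae_map_iff (p := (· ∈ Gamma p)) (measurable_digitsOf p).aemeasurable hΓ).2
    (ae_of_all _ fun u i => digitsOf_lt hp u i)

lemma volume_setOf_floor_mul_eq {q : ℝ} (hq : 0 < q) (c : ℕ) :
    volume {u : ℝ | 0 ≤ u ∧ ⌊u * q⌋₊ = c} = ENNReal.ofReal q⁻¹ := by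
  have : {u : ℝ | 0 ≤ u ∧ ⌊u * q⌋₊ = c} = Ico (c / q) ((c + 1) / q) := by
    ext u
    simp only [mem_ofPred_eq, Set.mem_Ico, div_le_iff₀ hq, lt_div_iff₀ hq]
    constructor
    · rintro ⟨hu, hc⟩
      exact (Nat.floor_eq_iff (by positivity)).1 hc
    · rintro ⟨h1, h2⟩
      have hu : 0 ≤ u := nonneg_of_mul_nonneg_left (le_trans (by positivity) h1) hq
      exact ⟨hu, (Nat.floor_eq_iff (by positivity)).2 ⟨h1, h2⟩⟩
  rw [this, Real.volume_Ico]
  congr 1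
  field_simp
  ring

lemma lam_cylinder (hp : 0 < p) {L : ℕ} {a : Fin L → ℕ} (ha : ∀ i, a i < p) :
    lam p {x | ∀ i : Fin L, x i = a i} = ENNReal.ofReal ((p : ℝ) ^ L)⁻¹ := by
  have hcyl : MeasurableSet {x : ℕ → ℕ | ∀ i : Fin L, x i = a i} := by
    simp only [ofPred_forall]
    exact .iInter fun i => (measurableSet_singleton _).preimage (measurable_pi_apply _)
  obtain ⟨c, hc, hcd⟩ := exists_lt_pow_digit_eq (fun i => a i.rev) fun i => ha _
  have hq : (0 : ℝ) < (p : ℝ) ^ L := by positivity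
  have hpre : digitsOf p ⁻¹' {x | ∀ i : Fin L, x i = a i} ∩ Ico 0 1 =
      {u : ℝ | 0 ≤ u ∧ ⌊u * (p : ℝ) ^ L⌋₊ = c} := by
    ext u
    simp only [mem_inter_iff, Set.mem_preimage, mem_ofPred_eq, Set.mem_Ico]
    constructor
    · rintro ⟨hdig, hu0, hu1⟩
      have hlt : ⌊u * (p : ℝ) ^ L⌋₊ < p ^ L := by
        rw [Nat.floor_lt (by positivity), Nat.cast_pow]
        nlinarith
      refine ⟨hu0, eq_of_digit_eq hlt hc fun j => ?_⟩
      rw [hcd, ← hdig, digitsOf_eq_digit_floor, Fin.rev_rev]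
    · rintro ⟨hu0, hfl⟩
      have hlt : ⌊u * (p : ℝ) ^ L⌋₊ < p ^ L := hfl ▸ hc
      rw [Nat.floor_lt (by positivity), Nat.cast_pow] at hlt
      refine ⟨fun i => ?_, hu0, lt_of_mul_lt_mul_right (by simpa using hlt) hq.le⟩
      rw [digitsOf_eq_digit_floor, hfl, hcd, Fin.rev_rev]
  rw [lam_apply hcyl, hpre, volume_setOf_floor_mul_eq hq]

lemma lam_window_ge_le (hp : 2 ≤ p) (K L : ℕ) :
    lam p {x | ∀ i : Fin (K + L), K ≤ (i : ℕ) → p - 2 ≤ x i} ≤ ENNReal.ofReal ((2 / p) ^ L) := by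
  let T : Fin (K + L) → Finset ℕ := fun i => if K ≤ (i : ℕ) then Finset.Ico (p - 2) p else range p
  have hT : ∀ a ∈ Fintype.piFinset T, ∀ i, a i < p := fun a ha i => by
    have := Fintype.mem_piFinset.1 ha i
    simp only [T] at this
    split_ifs at this <;> simp only [Finset.mem_Ico, Finset.mem_range] at this <;> omega
  have hcard : (Fintype.piFinset T).card = p ^ K * 2 ^ L := by
    rw [Fintype.card_piFinset, Fin.prod_univ_add]
    simp [T, show p - (p - 2) = 2 by omega, fun i : Fin K => not_le.2 i.is_lt]
  have hcover : {x | ∀ i : Fin (K + L), K ≤ (i : ℕ) → p - 2 ≤ x i} ≤ᵐ[lam p]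
      ⋃ a ∈ Fintype.piFinset T, {x | ∀ i : Fin (K + L), x i = a i} := by
    filter_upwards [ae_lam_mem_Gamma (by omega : 0 < p)] with x hx hwin
    refine mem_iUnion₂.2 ⟨fun i => x i, Fintype.mem_piFinset.2 fun i => ?_, fun i => rfl⟩
    have := hx i
    have := hwin i
    simp only [T]
    split_ifs <;> simp only [Finset.mem_Ico, Finset.mem_range] <;> omega
  calc _ ≤ lam p (⋃ a ∈ Fintype.piFinset T, {x | ∀ i : Fin (K + L), x i = a i}) :=
        measure_mono_ae hcover
    _ ≤ ∑ a ∈ Fintype.piFinset T, lam p {x | ∀ i : Fin (K + L), x i = a i} :=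
        measure_biUnion_finset_le _ _
    _ = (p ^ K * 2 ^ L : ℕ) * ENNReal.ofReal ((p : ℝ) ^ (K + L))⁻¹ := by
        rw [sum_congr rfl fun a ha => lam_cylinder (by omega) (hT a ha), sum_const, hcard,
          nsmul_eq_mul]
    _ = ENNReal.ofReal ((2 / p) ^ L) := by
        rw [← ENNReal.ofReal_natCast, ← ENNReal.ofReal_mul (by positivity)]
        congr 1
        have : (p : ℝ) ≠ 0 := by positivity
        push_cast
        rw [div_pow, pow_add]
        field_simp

lemma ae_lam_forall_exists_le (hp : 3 ≤ p) : ∀ᵐ x ∂lam p, ∀ K, ∃ N, K ≤ N ∧ x N + 3 ≤ p := by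
  refine ae_all_iff.2 fun K => ae_iff.2 (le_antisymm ?_ bot_le)
  have hbound : ∀ L, lam p {x | ¬∃ N, K ≤ N ∧ x N + 3 ≤ p} ≤ ENNReal.ofReal ((2 / p) ^ L) :=
    fun L => (measure_mono fun x hx i hi => by
      simp only [mem_ofPred_eq, not_exists, not_and] at hx
      have := hx i hi
      omega).trans (lam_window_ge_le (by omega) K L)
  have hlim : Filter.Tendsto (fun L : ℕ => ENNReal.ofReal ((2 / p : ℝ) ^ L))
      Filter.atTop (nhds 0) := by
    have h2p : (2 / p : ℝ) < 1 := by
      rw [div_lt_one (by positivity)]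
      exact_mod_cast (by omega : 2 < p)
    simpa using ENNReal.tendsto_ofReal (tendsto_pow_atTop_nhds_zero_of_lt_one (by positivity) h2p)
  exact ge_of_tendsto' hlim hbound

lemma setOf_pim_ne_zero (hp : 3 ≤ p) (m : ℕ) :
    {j | pim p m j ≠ 0} = range fun n => phiSum p m (digit p n) := by
  have hpow : ∀ k, k < p ^ k := fun k => Nat.lt_pow_self (by omega)
  ext j
  constructor
  · intro hj
    obtain ⟨x, hxj, hΓ, hsmall⟩ := ((frequently_ae_iff.2 hj).and_eventually
      ((ae_lam_mem_Gamma (by omega)).and (ae_lam_forall_exists_le hp))).exists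
    obtain ⟨N, hmN, hxN⟩ := hsmall m
    obtain ⟨n, hn, hdig⟩ := exists_lt_pow_digit_eq (L := N + 1) (fun i => x i) fun i => hΓ i
    have htop : n / p ^ N = x N := by
      have := hdig (Fin.last N)
      rw [Fin.val_last] at this
      rw [← this, digit, Nat.mod_eq_of_lt]
      exact Nat.div_lt_of_lt_mul (by rwa [← pow_succ])
    exact ⟨n, (phiSum_eq_phiSum_digit (hmN.trans (hpow N).le) (by omega)
      fun i hi => (hdig ⟨i, by omega⟩).symm).symm.trans hxj⟩
  · rintro ⟨n, rfl⟩
    have hsub : {x | ∀ i : Fin (m + n + 1), x i = digit p n i} ⊆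
        {x | phiSum p m x = phiSum p m (digit p n)} := fun x hx =>
      phiSum_eq_phiSum_digit (N := m + n) ((Nat.le_add_right m n).trans (hpow _).le)
        (by rw [Nat.div_eq_of_lt ((Nat.le_add_left n m).trans_lt (hpow _))]; omega)
        fun i hi => hx ⟨i, by omega⟩
    refine ne_bot_of_le_ne_bot ?_ (measure_mono hsub)
    rw [lam_cylinder (by omega) fun i => digit_lt (by omega) n i]
    exact ENNReal.ofReal_pos.2 (by positivity) |>.ne'

lemma D_eq_natD (hp : 3 ≤ p) (m : ℕ) : D p m = natD p m := by
  rw [D, setOf_pim_ne_zero hp]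
  rfl

end Measure

/-- `D_{pm} = m Δ_{p-2} + D_m`, and for `0 < k < p`,
`D_{pm+k} = m Δ_{p-2} + (p-k)(k-1) + Δ_{k-2} + D_m + max{p-k-1, D_{m+1} - D_m}`. -/
theorem statement_9 (p : ℕ) (hp : 3 ≤ p) (m : ℕ) :
    D p (p * m) = m * tri (p - 2) + D p m ∧
    (∀ k : ℕ, 0 < k → k < p →
      D p (p * m + k) =
        m * tri (p - 2) + (p - k) * (k - 1) + tri (k - 2) + D p m +
          max (p - k - 1) (D p (m + 1) - D p m)) := by
  simp only [D_eq_natD hp]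
  exact ⟨natD_mul (by omega) m, fun k hk0 hk => natD_mul_add (by omega) m hk0 hk⟩

end Chacon
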